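/- Let P be a partially ordered set regarded as a category (with a unique morphism p → q iff p ≤ q), and suppose P carries a left-invariant group structure. Then the category of functors from P to the category of ℤ-modules is equivalent to the category of P-graded modules over the monoid ring ℤ[P₊], where P₊ = {p : 1 ≤ p}, with the equivalence sending a functor F to the product ∏_{p ∈ P} F(p) with the action of a positive element ρ : 1 → q given componentwise by the maps F(p ≤ pq). -/

import Mathlib

open CategoryTheory

universe u

variable (G : Type) [Group G] [PartialOrder G] [CovariantClass G G (· * ·) (· ≤ ·)]

/-- The category of `P`-graded `ℤ[P₊]`-modules, for a partially ordered group `P`: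
an object is a family of `ℤ`-modules `(M_p)_{p ∈ P}` (the graded pieces of
`M = ∏_p 1_p M`) together with, for each positive element `1 ≤ q` of the cone `P₊`, maps
`M_p → M_{pq}` (the action of the degree-`q` part of the monoid ring `ℤ[P₊]`), compatibly
with the monoid structure of `P₊`. -/
structure PogGradedModule where
  piece : G → ModuleCat.{0} ℤ
  act : ∀ p q : G, 1 ≤ q → (piece p ⟶ piece (p * q))
  act_one : ∀ p, act p 1 le_rfl = eqToHom (by rw [mul_one])
  act_mul : ∀ (p q₁ q₂ : G) (h₁ : 1 ≤ q₁) (h₂ : 1 ≤ q₂) (h₁₂ : 1 ≤ q₁ * q₂),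
    act p (q₁ * q₂) h₁₂ = act p q₁ h₁ ≫ act (p * q₁) q₂ h₂ ≫ eqToHom (by rw [mul_assoc])

namespace PogGradedModule

variable {G}

/-- Morphisms of graded modules: degree-preserving families of `ℤ`-linear maps commuting
with the `ℤ[P₊]`-action. -/
@[ext]
structure Hom (M N : PogGradedModule G) where
  app : ∀ p, M.piece p ⟶ N.piece p
  comm : ∀ (p q : G) (h : 1 ≤ q), M.act p q h ≫ app (p * q) = app p ≫ N.act p q h

instance : Category (PogGradedModule G) where
  Hom := Hom
  id M := ⟨fun p => 𝟙 _, by intro p q h; simp⟩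
  comp f g := ⟨fun p => f.app p ≫ g.app p, by
    intro p q h
    rw [← Category.assoc, f.comm, Category.assoc, g.comm, ← Category.assoc]⟩

end PogGradedModule

/-!
By left invariance, `p ≤ q` holds exactly when `p⁻¹ q ∈ P₊`, and then `p · p⁻¹ q = q`. So the
arrow `p ≤ q` of a functor `F` is the action of `p⁻¹ q` on the piece `F(p)`, and conversely the
action of `q ∈ P₊` on `M_p` is the arrow `p ≤ pq`. Under this dictionary the functor laws are
`act_one` and `act_mul`, and natural transformations are the action-preserving graded maps.
-/

namespace PogGradedModule

variable {P : Type} [Group P] [PartialOrder P]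

lemma act_congr (M : PogGradedModule P) {p q q' : P} (hq : q = q') (h : 1 ≤ q) :
    M.act p q h = M.act p q' (hq ▸ h) ≫ eqToHom (by rw [hq]) := by
  subst hq; simp

lemma eqToHom_comp_act (M : PogGradedModule P) {p p' q : P} (hp : p = p') (h : 1 ≤ q) :
    eqToHom (congrArg M.piece hp) ≫ M.act p' q h = M.act p q h ≫ eqToHom (by rw [hp]) := by
  subst hp; simp

def isoMk {M N : PogGradedModule P} (e : ∀ p, M.piece p ≅ N.piece p)
    (comm : ∀ p q h, M.act p q h ≫ (e (p * q)).hom = (e p).hom ≫ N.act p q h) : M ≅ N where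
  hom := ⟨fun p => (e p).hom, comm⟩
  inv := ⟨fun p => (e p).inv, fun p q h => by
    rw [Iso.comp_inv_eq, Category.assoc, comm, Iso.inv_hom_id_assoc]⟩
  hom_inv_id := Hom.ext (funext fun p => (e p).hom_inv_id)
  inv_hom_id := Hom.ext (funext fun p => (e p).inv_hom_id)

variable [MulLeftMono P]

/-- The action of `p⁻¹ q ∈ P₊`, read as a map `M_p → M_q`. -/
def actLE (M : PogGradedModule P) {p q : P} (h : p ≤ q) : M.piece p ⟶ M.piece q :=
  M.act p (p⁻¹ * q) (le_inv_mul_iff_le.2 h) ≫ eqToHom (by rw [mul_inv_cancel_left])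

lemma act_eq_actLE (M : PogGradedModule P) (p q : P) (h : 1 ≤ q) :
    M.act p q h = M.actLE (le_mul_of_one_le_right' h) := by
  rw [actLE, M.act_congr (inv_mul_cancel_left p q).symm]

lemma actLE_refl (M : PogGradedModule P) (p : P) : M.actLE (le_refl p) = 𝟙 _ := by
  rw [actLE, M.act_congr (inv_mul_cancel p), M.act_one]
  simp

lemma actLE_trans (M : PogGradedModule P) {p q r : P} (hpq : p ≤ q) (hqr : q ≤ r) :
    M.actLE (hpq.trans hqr) = M.actLE hpq ≫ M.actLE hqr := by
  have hq : p * (p⁻¹ * q) = q := mul_inv_cancel_left p q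
  rw [actLE, actLE, actLE, M.act_congr (show p⁻¹ * r = p⁻¹ * q * (q⁻¹ * r) by group),
    M.act_mul p _ _ (le_inv_mul_iff_le.2 hpq) (le_inv_mul_iff_le.2 hqr)]
  simp only [Category.assoc]
  rw [← Category.assoc (eqToHom _) (M.act q _ _), M.eqToHom_comp_act hq]
  simp only [Category.assoc, eqToHom_trans]

lemma Hom.actLE_comp_app {M N : PogGradedModule P} (f : M ⟶ N) {p q : P} (h : p ≤ q) :
    M.actLE h ≫ f.app q = f.app p ≫ N.actLE h := by
  rw [actLE, actLE, Category.assoc, ← eqToHom_naturality f.app (mul_inv_cancel_left p q),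
    ← Category.assoc, f.comm, Category.assoc]

def ofFunctor (F : P ⥤ ModuleCat.{0} ℤ) : PogGradedModule P where
  piece := F.obj
  act p q h := F.map (homOfLE (le_mul_of_one_le_right' h))
  act_one p := by
    rw [← eqToHom_map F (mul_one p).symm]
    rfl
  act_mul p q₁ q₂ _ _ _ := by
    rw [← eqToHom_map F (mul_assoc p q₁ q₂), ← F.map_comp, ← F.map_comp]
    rfl

lemma ofFunctor_actLE (F : P ⥤ ModuleCat.{0} ℤ) {p q : P} (h : p ≤ q) :
    (ofFunctor F).actLE h = F.map (homOfLE h) := by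
  change F.map _ ≫ eqToHom (congrArg F.obj (mul_inv_cancel_left p q)) = _
  rw [← eqToHom_map F (mul_inv_cancel_left p q), ← F.map_comp]
  rfl

def toFunctor (M : PogGradedModule P) : P ⥤ ModuleCat.{0} ℤ where
  obj := M.piece
  map f := M.actLE f.le
  map_id := M.actLE_refl
  map_comp f g := M.actLE_trans f.le g.le

namespace FunctorEquivalence

def functor : (P ⥤ ModuleCat.{0} ℤ) ⥤ PogGradedModule P where
  obj := ofFunctor
  map α := ⟨α.app, fun _ _ _ => α.naturality _⟩

def inverse : PogGradedModule P ⥤ (P ⥤ ModuleCat.{0} ℤ) where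
  obj := toFunctor
  map f := { app := f.app, naturality := fun _ _ g => f.actLE_comp_app g.le }

def unitIso : 𝟭 (P ⥤ ModuleCat.{0} ℤ) ≅ functor ⋙ inverse :=
  NatIso.ofComponents
    (fun F => NatIso.ofComponents (fun p => Iso.refl (F.obj p)) fun f => by
      change F.map f ≫ 𝟙 _ = 𝟙 _ ≫ (ofFunctor F).actLE f.le
      rw [ofFunctor_actLE]
      exact (Category.comp_id _).trans (Category.id_comp _).symm)
    fun α => by ext p : 2; exact (Category.comp_id _).trans (Category.id_comp _).symm

def counitIso : inverse ⋙ functor ≅ 𝟭 (PogGradedModule P) :=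
  NatIso.ofComponents
    (fun M => isoMk (fun p => Iso.refl (M.piece p)) fun p q h => by
      change M.actLE (le_mul_of_one_le_right' h) ≫ 𝟙 _ = 𝟙 _ ≫ M.act p q h
      rw [Category.comp_id, Category.id_comp, act_eq_actLE])
    fun f => Hom.ext (funext fun p => (Category.comp_id _).trans (Category.id_comp _).symm)

end FunctorEquivalence

def functorEquivalence : (P ⥤ ModuleCat.{0} ℤ) ≌ PogGradedModule P :=
  CategoryTheory.Equivalence.mk FunctorEquivalence.functor FunctorEquivalence.inverse
    FunctorEquivalence.unitIso FunctorEquivalence.counitIso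

end PogGradedModule

/-- for a partially ordered group `P` regarded as a category, the category of
functors `P ⥤ ℤ-Mod` is equivalent to the category of `P`-graded `ℤ[P₊]`-modules; the
equivalence sends a functor `F` to the graded module with pieces `F(p)` (i.e. to
`∏_p F(p)`), the action of a positive element `ρ : 1 → q` being given componentwise by
`F(p ≤ pq)`. -/
theorem functors_equiv_graded_modules :
    ∃ (e : (G ⥤ ModuleCat.{0} ℤ) ≌ PogGradedModule G)
      (hp : ∀ (F : G ⥤ ModuleCat.{0} ℤ) (p : G), (e.functor.obj F).piece p = F.obj p),
      ∀ (F : G ⥤ ModuleCat.{0} ℤ) (p q : G) (h : 1 ≤ q),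
        (e.functor.obj F).act p q h =
          eqToHom (hp F p) ≫
            F.map (homOfLE (by simpa using mul_le_mul_right h p)) ≫
              eqToHom (hp F (p * q)).symm := by
  refine ⟨PogGradedModule.functorEquivalence, fun _ _ => rfl, fun F p q h => ?_⟩
  -- both `eqToHom`s are `𝟙`, and the action on `ofFunctor F` is `F.map` by definition
  exact ((Category.id_comp _).trans (Category.comp_id _)).symm
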